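/- Let L_1, …, L_n be pairwise commuting square complex matrices, p ∈ ℝ^m, and L(p) = ∑_k f_k(p) • L_k for functions f_k : ℝ^m → ℝ. Then for any X = exp(L(p)) * (∑_k a_k • L_k) and Y = exp(L(p)) * (∑_k b_k • L_k) with a, b ∈ ℝ^n, the sectional-curvature value κ(X,Y) computed from the orthonormal formula, namely (1/4) · g(⁅X,Y⁆, ⁅X,Y⁆), equals 0. Hence a commutative encoding scheme has flat curvature. (Paper's final Claim in Section IV.) -/

import Mathlib

open NormedSpace Matrix

theorem Commute.sum_smul_sum_smul {R A ι : Type*} [CommSemiring R] [Semiring A] [Algebra R A]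
    [Fintype ι] {L : ι → A} (hL : ∀ i j, Commute (L i) (L j)) (a b : ι → R) :
    Commute (∑ k, a k • L k) (∑ k, b k • L k) :=
  .sum_left _ _ _ fun i _ => .sum_right _ _ _ fun j _ => ((hL i j).smul_right _).smul_left _

theorem Commute.mul_mul_of_commute {M : Type*} [Monoid M] {e x y : M}
    (hx : Commute e x) (hy : Commute e y) (hxy : Commute x y) : Commute (e * x) (e * y) :=
  ((Commute.refl e).mul_right hy).mul_left (hx.symm.mul_right hxy)

theorem commutative_feature_map_flat_curvature_general
    {ι : Type*} [Fintype ι] [DecidableEq ι]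
    {N m : ℕ} (L : Fin N → Matrix ι ι ℂ)
    (hcomm : ∀ i j, L i * L j = L j * L i)
    (f : Fin N → (Fin m → ℝ) → ℝ) (p : Fin m → ℝ)
    (a b : Fin N → ℝ)
    (X Y : Matrix ι ι ℂ)
    (hX : X = exp (∑ k, f k p • L k) * ∑ k, a k • L k)
    (hY : Y = exp (∑ k, f k p • L k) * ∑ k, b k • L k) :
    (1 / 4 : ℂ) *
      ((Matrix.trace (⁅X, Y⁆ᴴ * ⁅X, Y⁆) + Matrix.trace (⁅X, Y⁆ᴴ * ⁅X, Y⁆)) /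
        (2 * (Fintype.card ι : ℂ))) = 0 := by
  have hspan (c d : Fin N → ℝ) := Commute.sum_smul_sum_smul hcomm c d
  have hXY : Commute X Y := by
    rw [hX, hY]
    exact .mul_mul_of_commute (hspan _ a).exp_left (hspan _ b).exp_left (hspan a b)
  simp [commute_iff_lie_eq.mp hXY]

/-- A commutative encoding scheme is flat: for tangent vectors
`X = exp (L p) * (∑ k, a k • L k)` and `Y = exp (L p) * (∑ k, b k • L k)`, the sectional
curvature value `(1/4) · g(⁅X,Y⁆, ⁅X,Y⁆)` (with `g(H,K) = (Tr(Hᴴ*K) + Tr(Kᴴ*H))/(2N)`,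
`N` the cardinality of the matrix index type) equals `0`. -/
theorem commutative_feature_map_flat_curvature
    {ι : Type*} [Fintype ι] [DecidableEq ι] [Nonempty ι]
    {N m : ℕ} (L : Fin N → Matrix ι ι ℂ)
    (hcomm : ∀ i j, L i * L j = L j * L i)
    (f : Fin N → (Fin m → ℝ) → ℝ) (p : Fin m → ℝ)
    (a b : Fin N → ℝ)
    (X Y : Matrix ι ι ℂ)
    (hX : X = exp (∑ k, f k p • L k) * ∑ k, a k • L k)
    (hY : Y = exp (∑ k, f k p • L k) * ∑ k, b k • L k) :
    (1 / 4 : ℂ) *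
      ((Matrix.trace (⁅X, Y⁆ᴴ * ⁅X, Y⁆) + Matrix.trace (⁅X, Y⁆ᴴ * ⁅X, Y⁆)) /
        (2 * (Fintype.card ι : ℂ))) = 0 :=
  commutative_feature_map_flat_curvature_general L hcomm f p a b X Y hX hY
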